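/- arXiv:2309.07821 — 2 statements merged into one kernel-verified Lean document; each statement's English description precedes it below -/
import Mathlib

section
/- If F ∈ L^p(ℝ) for some 1 ≤ p ≤ ∞, F ≥ 0, and F is decreasing on [c,∞), then for x > c and t > 0, F ∗ Θ_t(x) ≥ F(x) · (1/√π) ∫_0^{(x-c)/(2√t)} e^{-y²} dy. -/
open MeasureTheory Real ENNReal

/-!
On `[c, x]` the decreasing function `F` is at least `F x`, and `F ∗ Θ_t` is at least its
restriction to that interval, so `F ∗ Θ_t (x) ≥ F x · ∫_0^{x-c} Θ_t`; the substitution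
`u = 2√t y` turns the last integral into the error-function integral. The convolution integral
is finite by Hölder's inequality, `Θ_t` lying in every `L^q`.
-/

/-- The Gauss–Weierstrass heat kernel on ℝ. -/
noncomputable def heatKernel (t x : ℝ) : ℝ :=
  Real.exp (-x ^ 2 / (4 * t)) / (2 * Real.sqrt (Real.pi * t))

section heatKernel

variable {t : ℝ}

lemma heatKernel_pos (ht : 0 < t) (u : ℝ) : 0 < heatKernel t u := by
  have := Real.pi_pos
  exact div_pos (Real.exp_pos _) (by positivity)

lemma continuous_heatKernel (t : ℝ) : Continuous (heatKernel t) := by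
  unfold heatKernel
  fun_prop

lemma heatKernel_eq_mul_exp (ht : 0 < t) (u : ℝ) :
    heatKernel t u = (2 * √(π * t))⁻¹ * exp (-(u / (2 * √t)) ^ 2) := by
  have hst : 0 < √t := Real.sqrt_pos.2 ht
  rw [heatKernel, div_pow, mul_pow, Real.sq_sqrt ht.le, neg_div, div_eq_inv_mul]
  norm_num

lemma memLp_heatKernel (ht : 0 < t) (q : ℝ≥0∞) : MemLp (heatKernel t) q volume := by
  have hpi := Real.pi_pos
  have hmeas : AEStronglyMeasurable (heatKernel t) volume :=
    (continuous_heatKernel t).aestronglyMeasurable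
  rcases eq_or_ne q 0 with rfl | hq0
  · exact memLp_zero_iff_aestronglyMeasurable.2 hmeas
  rcases eq_or_ne q ∞ with rfl | hqtop
  · refine memLp_top_of_bound hmeas (2 * √(π * t))⁻¹
      (Filter.Eventually.of_forall fun u => ?_)
    rw [Real.norm_of_nonneg (heatKernel_pos ht u).le, heatKernel, div_eq_inv_mul]
    refine mul_le_of_le_one_right (by positivity) (Real.exp_le_one_iff.2 ?_)
    rw [neg_div]
    exact neg_nonpos.2 (by positivity)
  rw [← memLp_norm_rpow_iff hmeas hq0 hqtop, ENNReal.div_self hq0 hqtop, memLp_one_iff_integrable]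
  have hr : 0 < q.toReal := ENNReal.toReal_pos hq0 hqtop
  have hnorm : (fun u => ‖heatKernel t u‖ ^ q.toReal) =
      fun u => ((2 * √(π * t)) ^ q.toReal)⁻¹ * exp (-(q.toReal / (4 * t)) * u ^ 2) := by
    funext u
    rw [Real.norm_of_nonneg (heatKernel_pos ht u).le, heatKernel, div_eq_mul_inv,
      Real.mul_rpow (Real.exp_pos _).le (by positivity), Real.inv_rpow (by positivity),
      ← Real.exp_mul, mul_comm]
    congr 2
    field_simp
  rw [hnorm]
  exact (integrable_exp_neg_mul_sq (by positivity)).const_mul _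

lemma intervalIntegral_heatKernel (ht : 0 < t) (a : ℝ) :
    ∫ u in (0 : ℝ)..a, heatKernel t u =
      (1 / √π) * ∫ y in (0 : ℝ)..(a / (2 * √t)), exp (-y ^ 2) := by
  have hst : 0 < √t := Real.sqrt_pos.2 ht
  have hsp : 0 < √π := Real.sqrt_pos.2 Real.pi_pos
  simp_rw [heatKernel_eq_mul_exp ht]
  rw [intervalIntegral.integral_const_mul,
    intervalIntegral.integral_comp_div (fun y => exp (-y ^ 2)) (by positivity), zero_div,
    smul_eq_mul, Real.sqrt_mul Real.pi_pos.le]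
  field_simp

end heatKernel

lemma mul_intervalIntegral_le_integral_mul_of_antitoneOn {F g : ℝ → ℝ} {c x : ℝ}
    (hcx : c ≤ x) (hF : ∀ y, 0 ≤ F y) (hdec : AntitoneOn F (Set.Ici c)) (hg : ∀ y, 0 ≤ g y)
    (hg_int : IntegrableOn g (Set.Ioc c x)) (hFg : Integrable (fun y => F y * g y)) :
    F x * ∫ y in c..x, g y ≤ ∫ y, F y * g y :=
  calc F x * ∫ y in c..x, g y = ∫ y in Set.Ioc c x, F x * g y := by
        rw [intervalIntegral.integral_of_le hcx, integral_const_mul]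
    _ ≤ ∫ y in Set.Ioc c x, F y * g y :=
        setIntegral_mono_on (hg_int.const_mul _) hFg.integrableOn measurableSet_Ioc
          fun y hy => mul_le_mul_of_nonneg_right (hdec hy.1.le hcx hy.2) (hg y)
    _ ≤ ∫ y, F y * g y :=
        setIntegral_le_integral hFg
          (Filter.Eventually.of_forall fun y => mul_nonneg (hF y) (hg y))

/-- If `F ∈ L^p`, `F ≥ 0` and `F` is decreasing on `[c,∞)`, then for `x > c`, `t > 0`,
`F ∗ Θ_t(x) ≥ F(x)·(1/√π)∫_0^{(x-c)/(2√t)} e^{-y²} dy`. -/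
theorem convolution_heatKernel_lower_bound (p : ℝ≥0∞) (hp : 1 ≤ p)
    (F : ℝ → ℝ) (hF : MemLp F p (volume : Measure ℝ))
    (hFpos : ∀ x, 0 ≤ F x) (c : ℝ) (hdec : AntitoneOn F (Set.Ici c))
    (x t : ℝ) (hx : c < x) (ht : 0 < t) :
    F x * (1 / Real.sqrt Real.pi) *
        ∫ y in (0:ℝ)..((x - c) / (2 * Real.sqrt t)), Real.exp (-y ^ 2) ≤
      ∫ y : ℝ, F y * heatKernel t (x - y) := by
  have heat_sub (q : ℝ≥0∞) : MemLp (fun y => heatKernel t (x - y)) q volume :=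
    (memLp_heatKernel ht q).comp_measurePreserving (Measure.measurePreserving_sub_left volume x)
  have hpq := ENNReal.HolderConjugate.conjExponent hp
  have hFg : Integrable (fun y => F y * heatKernel t (x - y)) :=
    hF.integrable_mul (heat_sub p.conjExponent)
  calc F x * (1 / √π) * ∫ y in (0:ℝ)..((x - c) / (2 * √t)), exp (-y ^ 2)
      = F x * ∫ y in c..x, heatKernel t (x - y) := by
        rw [intervalIntegral.integral_comp_sub_left (heatKernel t) x, sub_self,
          intervalIntegral_heatKernel ht, mul_assoc]
    _ ≤ ∫ y, F y * heatKernel t (x - y) :=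
        mul_intervalIntegral_le_integral_mul_of_antitoneOn hx.le hFpos hdec
          (fun y => (heatKernel_pos ht _).le)
          (memLp_one_iff_integrable.1 (heat_sub 1)).integrableOn hFg
end

section
/- Let a > 0, t > 0, and let μ be the signed Borel measure on ℝ given by dμ(x) = [Θ_t(x+a) − Θ_t(x−a)]dx − dδ_{−a}(x) + dδ_a(x). Then the total variation V(μ) satisfies V(μ) ≥ (1/√π)∫_0^{a/√t} e^{−y²} dy, and hence liminf_{t→0⁺} V(μ) ≥ 1/2; in particular Θ_t(·+a) − Θ_t(·−a) does not converge to δ_{−a} − δ_a in variation as t → 0⁺. -/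
open MeasureTheory Real ENNReal Filter Classical

/-!
The unit atom at `a` survives the heat smoothing: the absolutely continuous part does not charge
`{a}` and `-a ≠ a`, so `V(μ t) ≥ |μ t {a}| = 1` for every `t > 0`, whereas
`(1/√π) ∫_0^{a/√t} e^{-y²} dy ≤ (1/√π) ∫_ℝ e^{-y²} dy = 1`.
The `liminf` in `ℝ` is only meaningful for functions bounded above, so we also need
`V(μ t) ≤ 6`: every `|μ t E| ≤ 3`, and a Hahn decomposition gives `V(s) ≤ 2 sup_E |s E|`.
-/

open Set

namespace MeasureTheory.SignedMeasure

variable {X : Type*} [MeasurableSpace X]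

theorem totalVariation_real_univ_le_two_mul (s : SignedMeasure X) {B : ℝ}
    (h : ∀ E, MeasurableSet E → |s E| ≤ B) : s.totalVariation.real univ ≤ 2 * B := by
  obtain ⟨i, hi, hpos, hneg, hposPart, hnegPart⟩ := s.toJordanDecomposition_spec
  have hposPart_univ : s.toJordanDecomposition.posPart.real univ = s i := by
    rw [measureReal_def, hposPart, toMeasureOfZeroLE_apply _ hpos hi MeasurableSet.univ]
    simp
  have hnegPart_univ : s.toJordanDecomposition.negPart.real univ = -s iᶜ := by
    rw [measureReal_def, hnegPart, toMeasureOfLEZero_apply _ hneg hi.compl MeasurableSet.univ]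
    simp
  rw [totalVariation, measureReal_add_apply, hposPart_univ, hnegPart_univ]
  linarith [abs_le.mp (h i hi), abs_le.mp (h iᶜ hi.compl)]

end MeasureTheory.SignedMeasure

section HeatKernel

variable {t : ℝ}

theorem heatKernel_nonneg (t x : ℝ) : 0 ≤ heatKernel t x := by
  unfold heatKernel
  positivity

theorem heatKernel_eq_gaussian (t : ℝ) :
    heatKernel t = fun x => rexp (-(4 * t)⁻¹ * x ^ 2) / (2 * √(π * t)) := by
  ext x
  rw [heatKernel]
  congr 2
  ring

theorem integrable_heatKernel (ht : 0 < t) : Integrable (heatKernel t) := by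
  rw [heatKernel_eq_gaussian]
  exact (integrable_exp_neg_mul_sq (by positivity)).div_const _

theorem integral_heatKernel (ht : 0 < t) : ∫ x, heatKernel t x = 1 := by
  rw [heatKernel_eq_gaussian, integral_div, integral_gaussian, div_inv_eq_mul,
    show π * (4 * t) = 2 ^ 2 * (π * t) by ring, sqrt_mul (by positivity),
    sqrt_sq zero_le_two, div_self (by positivity)]

theorem setIntegral_heatKernel_add_le_one (ht : 0 < t) (c : ℝ) (E : Set ℝ) :
    ∫ x in E, heatKernel t (x + c) ≤ 1 := by
  calc ∫ x in E, heatKernel t (x + c)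
      ≤ ∫ x, heatKernel t (x + c) :=
        setIntegral_le_integral ((integrable_heatKernel ht).comp_add_right c)
          (.of_forall fun _ => heatKernel_nonneg _ _)
    _ = 1 := by rw [integral_add_right_eq_self (heatKernel t), integral_heatKernel ht]

theorem abs_setIntegral_heatKernel_sub_add_dirac_le (ht : 0 < t) (a : ℝ) (E : Set ℝ) :
    |(∫ x in E, (heatKernel t (x + a) - heatKernel t (x - a)))
        - (if -a ∈ E then 1 else 0) + (if a ∈ E then 1 else 0)| ≤ 3 := by
  simp_rw [sub_eq_add_neg _ a]
  have hintegrable (c : ℝ) : IntegrableOn (fun x => heatKernel t (x + c)) E :=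
    ((integrable_heatKernel ht).comp_add_right c).integrableOn
  have hnonneg (c : ℝ) : 0 ≤ ∫ x in E, heatKernel t (x + c) :=
    integral_nonneg fun _ => heatKernel_nonneg _ _
  rw [integral_sub (hintegrable a) (hintegrable (-a)), abs_le]
  constructor <;> split_ifs <;>
    linarith [setIntegral_heatKernel_add_le_one ht a E, setIntegral_heatKernel_add_le_one ht (-a) E,
      hnonneg a, hnonneg (-a)]

end HeatKernel

theorem intervalIntegral_exp_neg_sq_le_sqrt_pi {b : ℝ} (hb : 0 ≤ b) :
    ∫ y in (0 : ℝ)..b, rexp (-y ^ 2) ≤ √π := by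
  have hintegrable : Integrable fun y : ℝ => rexp (-1 * y ^ 2) :=
    integrable_exp_neg_mul_sq one_pos
  simp only [neg_one_mul] at hintegrable
  calc ∫ y in (0 : ℝ)..b, rexp (-y ^ 2)
      ≤ ∫ y, rexp (-y ^ 2) := by
        rw [intervalIntegral.integral_of_le hb]
        exact setIntegral_le_integral hintegrable (.of_forall fun _ => (exp_pos _).le)
    _ = √π := by simpa using integral_gaussian 1

/-- Let `a > 0` and, for each `t > 0`, let `μ t` be the signed Borel measure
`dμ(x) = [Θ_t(x+a) − Θ_t(x−a)]dx − dδ_{−a}(x) + dδ_a(x)`.  Then the total variation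
satisfies `V(μ t) ≥ (1/√π)∫_0^{a/√t} e^{−y²} dy`, and hence
`liminf_{t→0⁺} V(μ t) ≥ 1/2`; in particular `Θ_t(·+a) − Θ_t(·−a)` does not converge
to `δ_{−a} − δ_a` in variation as `t → 0⁺`. -/
theorem heat_dirac_difference_not_convergent_in_variation (a : ℝ) (ha : 0 < a)
    (μ : ℝ → MeasureTheory.SignedMeasure ℝ)
    (hμ : ∀ t > (0:ℝ), ∀ E : Set ℝ, MeasurableSet E →
      μ t E = (∫ x in E, (heatKernel t (x + a) - heatKernel t (x - a)))
        - (if -a ∈ E then 1 else 0) + (if a ∈ E then 1 else 0)) :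
    (∀ t > (0:ℝ),
      (1 / Real.sqrt Real.pi) *
          ∫ y in (0:ℝ)..(a / Real.sqrt t), Real.exp (-y ^ 2) ≤
        ((μ t).totalVariation Set.univ).toReal) ∧
    (1 / 2 : ℝ) ≤
      Filter.liminf (fun t : ℝ => ((μ t).totalVariation Set.univ).toReal)
        (nhdsWithin 0 (Set.Ioi 0)) ∧
    ¬ Tendsto (fun t : ℝ => ((μ t).totalVariation Set.univ).toReal)
        (nhdsWithin 0 (Set.Ioi 0)) (nhds 0) := by
  have one_le : ∀ t > (0 : ℝ), 1 ≤ (μ t).totalVariation.real univ := fun t ht => by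
    have hatom : μ t {a} = 1 := by
      have hne : -a ≠ a := by linarith
      simp [hμ t ht {a} (measurableSet_singleton a), hne]
    calc (1 : ℝ) = ‖μ t {a}‖ := by simp [hatom]
      _ ≤ (μ t).totalVariation.real {a} := (μ t).norm_le_totalVariation {a}
      _ ≤ (μ t).totalVariation.real univ := measureReal_mono (subset_univ _)
  have le_six : ∀ t > (0 : ℝ), (μ t).totalVariation.real univ ≤ 6 := fun t ht => by
    linarith [(μ t).totalVariation_real_univ_le_two_mul fun E hE =>
      (hμ t ht E hE).symm ▸ abs_setIntegral_heatKernel_sub_add_dirac_le ht a E]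
  have one_le_ev : ∀ᶠ t in nhdsWithin 0 (Ioi 0), 1 ≤ (μ t).totalVariation.real univ :=
    eventually_nhdsWithin_of_forall one_le
  refine ⟨fun t ht => ?_, ?_, fun hT => ?_⟩
  · calc (1 / √π) * ∫ y in (0 : ℝ)..(a / √t), rexp (-y ^ 2)
        ≤ (1 / √π) * √π := by
          gcongr
          exact intervalIntegral_exp_neg_sq_le_sqrt_pi (by positivity)
      _ = 1 := one_div_mul_cancel (sqrt_pos.mpr pi_pos).ne'
      _ ≤ _ := one_le t ht
  · exact le_liminf_of_le
      (isCoboundedUnder_ge_of_eventually_le _ (eventually_nhdsWithin_of_forall le_six))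
      (one_le_ev.mono fun _ h => le_trans (by norm_num) h)
  · obtain ⟨t, h1, h2⟩ := (one_le_ev.and (hT.eventually (gt_mem_nhds one_pos))).exists
    exact lt_irrefl 1 (h1.trans_lt h2)
end
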